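/- Let G be a compact group, f continuous on G, Nf(s,t) = f(st⁻¹), and π, σ irreducible unitary representations of G with σ not equivalent to π̄. Then the Fourier coefficient (Nf)^(π×σ) = 0. -/

import Mathlib

open MeasureTheory Matrix
open scoped Kronecker ComplexOrder

attribute [local instance] Matrix.normedAddCommGroup Matrix.normedSpace

noncomputable section

def frobNorm {m n : Type*} [Fintype m] [Fintype n] (A : Matrix m n ℂ) : ℝ :=
  Real.sqrt (∑ i, ∑ j, ‖A i j‖ ^ 2)

def traceNorm {n : Type*} [Fintype n] [DecidableEq n] (A : Matrix n n ℂ) : ℝ :=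
  ∑ i, Real.sqrt ((Matrix.posSemidef_conjTranspose_mul_self A).1.eigenvalues i)

def fourierCoef {G : Type*} [MeasurableSpace G] (μ : Measure G) (f : G → ℂ)
    {n : Type*} [Fintype n] (ρ : G → Matrix n n ℂ) : Matrix n n ℂ :=
  ∫ s, f s • (ρ s).map (starRingEnd ℂ) ∂μ

/-!
Substituting `t = u * s` (Haar measure on a compact group is also right invariant) factors the
inner integral as `C * (π̄ s ⊗ σ̄ s)` with `C` independent of `s`, so the coefficient is
`C * ∫ π̄ ⊗ σ̄`. Each entry of `∫ π̄ ⊗ σ̄` is the conjugate of an entry of an averaged operator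
`∫ σ s * X * π̄ s⁻¹`, which intertwines `σ` and `π̄` and therefore vanishes.
-/

instance IsHaarMeasure.isMulRightInvariant_of_compactSpace {G : Type*} [Group G]
    [TopologicalSpace G] [IsTopologicalGroup G] [CompactSpace G] [MeasurableSpace G]
    [BorelSpace G] (μ : Measure G) [μ.IsHaarMeasure] : μ.IsMulRightInvariant := by
  refine ⟨fun g => ?_⟩
  set c := Measure.haarScalarFactor (Measure.map (· * g) μ) μ
  have h : Measure.map (· * g) μ = c • μ :=
    Measure.isMulInvariant_eq_smul_of_compactSpace _ μ
  have hc : (c : ENNReal) * μ Set.univ = 1 * μ Set.univ := by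
    rw [one_mul, ← smul_eq_mul, ← ENNReal.smul_def, ← Measure.smul_apply, ← h,
      Measure.map_apply (measurable_mul_const g) MeasurableSet.univ, Set.preimage_univ]
  rw [ENNReal.mul_left_inj (NeZero.ne _) (measure_ne_top _ _), ENNReal.coe_eq_one] at hc
  rw [h, hc, one_smul]

-- Instance search misses this: the sup norm's topology is the matrix topology only after
-- unfolding `instTopologicalSpaceMatrix`.
instance Matrix.continuousENorm {m n R : Type*} [Fintype m] [Fintype n] [NormedAddCommGroup R] :
    ContinuousENorm (Matrix m n R) :=
  SeminormedAddGroup.toContinuousENorm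

section MatrixIntegral

variable {α : Type*} [MeasurableSpace α] {μ : Measure α} {l m n : Type*}
  [Fintype l] [Fintype m] [Fintype n]

theorem Matrix.integral_apply {F : α → Matrix m n ℂ} (hF : Integrable F μ) (i : m) (j : n) :
    (∫ a, F a ∂μ) i j = ∫ a, F a i j ∂μ :=
  ((entryLinearMap ℂ ℂ i j).toContinuousLinearMap.integral_comp_comm hF).symm

theorem Matrix.integral_const_mul (A : Matrix l m ℂ) {F : α → Matrix m n ℂ}
    (hF : Integrable F μ) : ∫ a, A * F a ∂μ = A * ∫ a, F a ∂μ :=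
  (mulLeftLinearMap n ℂ A).toContinuousLinearMap.integral_comp_comm hF

theorem Matrix.integral_mul_const (B : Matrix m n ℂ) {F : α → Matrix l m ℂ}
    (hF : Integrable F μ) : ∫ a, F a * B ∂μ = (∫ a, F a ∂μ) * B :=
  (mulRightLinearMap l ℂ B).toContinuousLinearMap.integral_comp_comm hF

end MatrixIntegral

theorem Matrix.apply_inv_eq_conjTranspose {G R n : Type*} [Group G] [CommRing R] [StarRing R]
    [Fintype n] [DecidableEq n] {ρ : G → Matrix n n R} (hone : ρ 1 = 1)
    (hmul : ∀ s t, ρ (s * t) = ρ s * ρ t) (hunitary : ∀ s, ρ s * (ρ s)ᴴ = 1) (s : G) :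
    ρ s⁻¹ = (ρ s)ᴴ :=
  (inv_eq_right_inv (by rw [← hmul, mul_inv_cancel, hone])).symm.trans
    (inv_eq_right_inv (hunitary s))

theorem Matrix.map_conj_apply_mul {G n : Type*} [Mul G] [Fintype n] {ρ : G → Matrix n n ℂ}
    (hmul : ∀ s t, ρ (s * t) = ρ s * ρ t) (s t : G) :
    (ρ (s * t)).map (starRingEnd ℂ) = (ρ s).map (starRingEnd ℂ) * (ρ t).map (starRingEnd ℂ) := by
  rw [hmul, Matrix.map_mul]

theorem Continuous.matrix_kronecker {X R l m n p : Type*} [TopologicalSpace X]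
    [TopologicalSpace R] [Mul R] [ContinuousMul R] {A : X → Matrix l m R} {B : X → Matrix n p R}
    (hA : Continuous A) (hB : Continuous B) : Continuous fun x => A x ⊗ₖ B x :=
  continuous_matrix fun i j => (hA.matrix_elem i.1 j.1).mul (hB.matrix_elem i.2 j.2)

section CompactGroup

variable {G : Type*} [Group G] [TopologicalSpace G] [IsTopologicalGroup G] [CompactSpace G]
  [MeasurableSpace G] [BorelSpace G] (μ : Measure G) [μ.IsHaarMeasure]
  {l l' m n : Type*} [Fintype l] [Fintype l'] [Fintype m] [Fintype n]

theorem mul_integral_mul_mul_apply_inv {ρ₁ : G → Matrix m m ℂ} {ρ₂ : G → Matrix n n ℂ}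
    (h₁mul : ∀ s t, ρ₁ (s * t) = ρ₁ s * ρ₁ t) (h₁cont : Continuous ρ₁)
    (h₂mul : ∀ s t, ρ₂ (s * t) = ρ₂ s * ρ₂ t) (h₂cont : Continuous ρ₂)
    (X : Matrix m n ℂ) (u : G) :
    ρ₁ u * ∫ s, ρ₁ s * X * ρ₂ s⁻¹ ∂μ = (∫ s, ρ₁ s * X * ρ₂ s⁻¹ ∂μ) * ρ₂ u := by
  have hcont : Continuous fun s => ρ₁ s * X * ρ₂ s⁻¹ :=
    (h₁cont.matrix_mul continuous_const).matrix_mul (h₂cont.comp continuous_inv)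
  have hshift : ∀ s, ρ₁ u * (ρ₁ s * X * ρ₂ s⁻¹) = ρ₁ (u * s) * X * ρ₂ (u * s)⁻¹ * ρ₂ u := by
    intro s
    simp only [h₁mul, Matrix.mul_assoc, ← h₂mul, _root_.mul_inv_rev, inv_mul_cancel_right]
  calc ρ₁ u * ∫ s, ρ₁ s * X * ρ₂ s⁻¹ ∂μ
      = ∫ s, ρ₁ u * (ρ₁ s * X * ρ₂ s⁻¹) ∂μ :=
        (Matrix.integral_const_mul _
          (hcont.integrable_of_hasCompactSupport (.of_compactSpace _))).symm
    _ = ∫ s, ρ₁ (u * s) * X * ρ₂ (u * s)⁻¹ * ρ₂ u ∂μ := by simp only [hshift]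
    _ = (∫ s, ρ₁ (u * s) * X * ρ₂ (u * s)⁻¹ ∂μ) * ρ₂ u :=
        Matrix.integral_mul_const _
          ((hcont.comp (continuous_const_mul u)).integrable_of_hasCompactSupport
            (.of_compactSpace _))
    _ = (∫ s, ρ₁ s * X * ρ₂ s⁻¹ ∂μ) * ρ₂ u := by
        rw [integral_mul_left_eq_self (fun s => ρ₁ s * X * ρ₂ s⁻¹) u]

theorem integral_apply_mul_inv_smul_kronecker [DecidableEq l] {ρ : G → Matrix n n ℂ}
    (hmul : ∀ s t, ρ (s * t) = ρ s * ρ t) (hcont : Continuous ρ) {f : G → ℂ} (hf : Continuous f)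
    (A : Matrix l l' ℂ) (s : G) :
    ∫ t, f (s * t⁻¹) • (A ⊗ₖ ρ t) ∂μ
      = (∫ u, f u⁻¹ • ((1 : Matrix l l ℂ) ⊗ₖ ρ u) ∂μ) * (A ⊗ₖ ρ s) := by
  have hint : Integrable (fun u => f u⁻¹ • ((1 : Matrix l l ℂ) ⊗ₖ ρ u)) μ :=
    ((hf.comp continuous_inv).smul (continuous_const.matrix_kronecker hcont))
      |>.integrable_of_hasCompactSupport (.of_compactSpace _)
  rw [← integral_mul_right_eq_self _ s, ← Matrix.integral_mul_const _ hint]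
  congr 1
  ext1 u
  rw [_root_.mul_inv_rev, mul_inv_cancel_left, hmul, Matrix.smul_mul, ← mul_kronecker_mul,
    Matrix.one_mul]

theorem integral_map_conj_kronecker_eq_zero [DecidableEq m] [DecidableEq n]
    {π : G → Matrix m m ℂ} {σ : G → Matrix n n ℂ} (hπone : π 1 = 1)
    (hπmul : ∀ s t, π (s * t) = π s * π t) (hπcont : Continuous π)
    (hπunitary : ∀ s, π s * (π s)ᴴ = 1)
    (hσmul : ∀ s t, σ (s * t) = σ s * σ t) (hσcont : Continuous σ)
    (hineq : ∀ T : Matrix n m ℂ, (∀ s, σ s * T = T * (π s).map (starRingEnd ℂ)) → T = 0) :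
    ∫ s, (π s).map (starRingEnd ℂ) ⊗ₖ (σ s).map (starRingEnd ℂ) ∂μ = 0 := by
  have hπ'cont : Continuous fun s => (π s).map (starRingEnd ℂ) :=
    hπcont.matrix_map Complex.continuous_conj
  have hσ'cont : Continuous fun s => (σ s).map (starRingEnd ℂ) :=
    hσcont.matrix_map Complex.continuous_conj
  ext ⟨i, j⟩ ⟨i', j'⟩
  have hT : ∫ s, σ s * single j' i' (1 : ℂ) * (π s⁻¹).map (starRingEnd ℂ) ∂μ = 0 :=
    hineq _ fun s =>
      mul_integral_mul_mul_apply_inv μ hσmul hσcont (Matrix.map_conj_apply_mul hπmul) hπ'cont _ s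
  have hTint :
      Integrable (fun s => σ s * single j' i' (1 : ℂ) * (π s⁻¹).map (starRingEnd ℂ)) μ :=
    ((hσcont.matrix_mul continuous_const).matrix_mul (hπ'cont.comp continuous_inv)
      ).integrable_of_hasCompactSupport (.of_compactSpace _)
  have hTji : ∫ s, π s i i' * σ s j j' ∂μ = 0 := by
    rw [← Matrix.zero_apply j i, ← hT, Matrix.integral_apply hTint]
    congr 1
    ext1 s
    simp [Matrix.apply_inv_eq_conjTranspose hπone hπmul hπunitary, mul_apply, single, ite_and,
      mul_comm]
  rw [Matrix.integral_apply ((hπ'cont.matrix_kronecker hσ'cont).integrable_of_hasCompactSupport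
    (.of_compactSpace _))]
  simp only [kroneckerMap_apply, Matrix.map_apply, ← map_mul]
  rw [integral_conj, hTji, map_zero, Matrix.zero_apply]

end CompactGroup

theorem fourierCoef_twisted_eq_zero_general
    {G : Type} [Group G] [TopologicalSpace G] [IsTopologicalGroup G] [CompactSpace G]
    [MeasurableSpace G] [BorelSpace G]
    (μ : Measure G) [μ.IsHaarMeasure]
    (d d' : ℕ) (π : G → Matrix (Fin d) (Fin d) ℂ) (σ : G → Matrix (Fin d') (Fin d') ℂ)
    (hπone : π 1 = 1) (hπmul : ∀ s t, π (s * t) = π s * π t) (hπcont : Continuous π)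
    (hπunitary : ∀ s, π s * (π s)ᴴ = 1)
    (hσmul : ∀ s t, σ (s * t) = σ s * σ t) (hσcont : Continuous σ)
    -- σ is not equivalent to π̄ : every intertwiner from σ to π̄ is zero
    (hineq : ∀ T : Matrix (Fin d') (Fin d) ℂ,
      (∀ s, σ s * T = T * (π s).map (starRingEnd ℂ)) → T = 0)
    (f : G → ℂ) (hf : Continuous f) :
    (∫ s, (∫ t, f (s * t⁻¹) •
        (((π s).map (starRingEnd ℂ)) ⊗ₖ ((σ t).map (starRingEnd ℂ))) ∂μ) ∂μ) = 0 := by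
  have hσ'cont : Continuous fun s => (σ s).map (starRingEnd ℂ) :=
    hσcont.matrix_map Complex.continuous_conj
  have hint : Integrable (fun s => (π s).map (starRingEnd ℂ) ⊗ₖ (σ s).map (starRingEnd ℂ)) μ :=
    ((hπcont.matrix_map Complex.continuous_conj).matrix_kronecker hσ'cont
      ).integrable_of_hasCompactSupport (.of_compactSpace _)
  simp_rw [integral_apply_mul_inv_smul_kronecker μ (Matrix.map_conj_apply_mul hσmul) hσ'cont hf]
  rw [Matrix.integral_const_mul _ hint,
    integral_map_conj_kronecker_eq_zero μ hπone hπmul hπcont hπunitary hσmul hσcont hineq,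
    Matrix.mul_zero]

/-- For a compact group G, continuous f, Nf(s,t) = f(st⁻¹), and irreducible
unitary representations π, σ with σ not equivalent to π̄ (i.e. there is no
nonzero intertwiner between σ and π̄), the Fourier coefficient of Nf at the
Kronecker product representation π × σ vanishes. -/
theorem fourierCoef_twisted_eq_zero
    {G : Type} [Group G] [TopologicalSpace G] [IsTopologicalGroup G] [CompactSpace G]
    [MeasurableSpace G] [BorelSpace G]
    (μ : Measure G) [μ.IsHaarMeasure] [IsProbabilityMeasure μ]
    (d d' : ℕ) (π : G → Matrix (Fin d) (Fin d) ℂ) (σ : G → Matrix (Fin d') (Fin d') ℂ)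
    (hπone : π 1 = 1) (hπmul : ∀ s t, π (s * t) = π s * π t) (hπcont : Continuous π)
    (hπunitary : ∀ s, π s * (π s)ᴴ = 1)
    (hπirr : ∀ A : Matrix (Fin d) (Fin d) ℂ, (∀ s, π s * A = A * π s) → ∃ c : ℂ, A = c • 1)
    (hσone : σ 1 = 1) (hσmul : ∀ s t, σ (s * t) = σ s * σ t) (hσcont : Continuous σ)
    (hσunitary : ∀ s, σ s * (σ s)ᴴ = 1)
    (hσirr : ∀ A : Matrix (Fin d') (Fin d') ℂ, (∀ s, σ s * A = A * σ s) → ∃ c : ℂ, A = c • 1)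
    -- σ is not equivalent to π̄ : every intertwiner from σ to π̄ is zero
    (hineq : ∀ T : Matrix (Fin d') (Fin d) ℂ,
      (∀ s, σ s * T = T * (π s).map (starRingEnd ℂ)) → T = 0)
    (f : G → ℂ) (hf : Continuous f) :
    (∫ s, (∫ t, f (s * t⁻¹) •
        (((π s).map (starRingEnd ℂ)) ⊗ₖ ((σ t).map (starRingEnd ℂ))) ∂μ) ∂μ) = 0 :=
  fourierCoef_twisted_eq_zero_general μ d d' π σ hπone hπmul hπcont hπunitary hσmul hσcont hineq f
    hf
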